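/- For the amplitude-damping process (E, ρ) with ρ = diag((1+r₃)/2, (1-r₃)/2), the two-time expectation values of Pauli observables satisfy: ⟨σ₀,σ₃⟩ = r₃ + γ(1-r₃), ⟨σ₃,σ₀⟩ = r₃, ⟨σ₁,σ₁⟩ = ⟨σ₂,σ₂⟩ = √(1-γ), ⟨σ₃,σ₃⟩ = 1 - γ(1-r₃), and ⟨σ_α,σ_β⟩ = 0 for all other pairs with α ≠ β from {0,1,2,3}, where ⟨σ_α,σ_β⟩ := Tr[(E ⋆ ρ)(σ_α ⊗ σ_β)]. -/

import Mathlib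

open Matrix
open scoped Kronecker

noncomputable section

/-- The Jamiolkowski matrix `J[E] = ∑ i j, |i⟩⟨j| ⊗ E(|j⟩⟨i|)`. -/
def Jam {n m : ℕ} (E : Matrix (Fin n) (Fin n) ℂ → Matrix (Fin m) (Fin m) ℂ) :
    Matrix (Fin n × Fin m) (Fin n × Fin m) ℂ :=
  ∑ i : Fin n, ∑ j : Fin n,
    (Matrix.single i j (1 : ℂ)) ⊗ₖ E (Matrix.single j i (1 : ℂ))

/-- The spatiotemporal product `E ⋆ ρ = ½{ρ ⊗ 1, J[E]}`. -/
def sot {n m : ℕ} (E : Matrix (Fin n) (Fin n) ℂ → Matrix (Fin m) (Fin m) ℂ)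
    (ρ : Matrix (Fin n) (Fin n) ℂ) : Matrix (Fin n × Fin m) (Fin n × Fin m) ℂ :=
  (1 / 2 : ℂ) • ((ρ ⊗ₖ (1 : Matrix (Fin m) (Fin m) ℂ)) * Jam E
      + Jam E * (ρ ⊗ₖ (1 : Matrix (Fin m) (Fin m) ℂ)))

/-- The swap map `S(σ ⊗ τ) = τ ⊗ σ` on matrix algebras. -/
def swapM {m n : ℕ} (X : Matrix (Fin m × Fin n) (Fin m × Fin n) ℂ) :
    Matrix (Fin n × Fin m) (Fin n × Fin m) ℂ :=
  X.submatrix (fun p => (p.2, p.1)) (fun p => (p.2, p.1))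

/-- The Choi matrix `C[E] = ∑ i j, |i⟩⟨j| ⊗ E(|i⟩⟨j|)`. -/
def ChoiM {n m : ℕ} (E : Matrix (Fin n) (Fin n) ℂ → Matrix (Fin m) (Fin m) ℂ) :
    Matrix (Fin n × Fin m) (Fin n × Fin m) ℂ :=
  ∑ i : Fin n, ∑ j : Fin n,
    (Matrix.single i j (1 : ℂ)) ⊗ₖ E (Matrix.single i j (1 : ℂ))

/-- Pauli matrix σ₁. -/
def pauli1 : Matrix (Fin 2) (Fin 2) ℂ := !![0, 1; 1, 0]
/-- Pauli matrix σ₂. -/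
def pauli2 : Matrix (Fin 2) (Fin 2) ℂ := !![0, -Complex.I; Complex.I, 0]
/-- Pauli matrix σ₃. -/
def pauli3 : Matrix (Fin 2) (Fin 2) ℂ := !![1, 0; 0, -1]

/-- First Kraus operator of the amplitude-damping channel. -/
def AD0 (γ : ℝ) : Matrix (Fin 2) (Fin 2) ℂ := !![1, 0; 0, (Real.sqrt (1 - γ) : ℂ)]
/-- Second Kraus operator of the amplitude-damping channel. -/
def AD1 (γ : ℝ) : Matrix (Fin 2) (Fin 2) ℂ := !![0, (Real.sqrt γ : ℂ); 0, 0]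
/-- The amplitude-damping channel with damping parameter γ. -/
def AD (γ : ℝ) (X : Matrix (Fin 2) (Fin 2) ℂ) : Matrix (Fin 2) (Fin 2) ℂ :=
  AD0 γ * X * (AD0 γ)ᴴ + AD1 γ * X * (AD1 γ)ᴴ

/-!
For a linear map `E`, `Tr[J[E] (X ⊗ B)] = Tr[E(X) B]`, so by cyclicity of the trace
`Tr[(E ⋆ ρ)(A ⊗ B)] = Tr[E(½{ρ, A}) B]`: a two-time value is the expectation of `B` in the
image under `E` of the Jordan product of `ρ` and `A`. For the amplitude-damping channel and a
diagonal `ρ` this is an explicit bilinear form in the entries of `A` and `B`, which is then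
evaluated on the Pauli matrices.
-/

section

variable {n m : ℕ} (E : Matrix (Fin n) (Fin n) ℂ →ₗ[ℂ] Matrix (Fin m) (Fin m) ℂ)

theorem trace_jam_mul_kronecker (X : Matrix (Fin n) (Fin n) ℂ) (B : Matrix (Fin m) (Fin m) ℂ) :
    (Jam E * (X ⊗ₖ B)).trace = (E X * B).trace := by
  have h_single (i j : Fin n) : single i j (X i j) = X i j • single i j (1 : ℂ) := by
    rw [smul_single, smul_eq_mul, mul_one]
  conv_rhs => rw [matrix_eq_sum_single X]
  simp only [Jam, Finset.sum_mul, ← mul_kronecker_mul, trace_sum, trace_kronecker,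
    trace_single_mul, h_single, map_sum, map_smul, smul_mul, trace_smul, smul_eq_mul, one_mul]
  rw [Finset.sum_comm]

theorem trace_sot_mul_kronecker (ρ A : Matrix (Fin n) (Fin n) ℂ) (B : Matrix (Fin m) (Fin m) ℂ) :
    (sot E ρ * (A ⊗ₖ B)).trace = (E ((1 / 2 : ℂ) • (ρ * A + A * ρ)) * B).trace := by
  have h₁ : ((ρ ⊗ₖ 1) * Jam E * (A ⊗ₖ B)).trace = (Jam E * ((A * ρ) ⊗ₖ B)).trace := by
    rw [Matrix.mul_assoc, trace_mul_comm, Matrix.mul_assoc, ← mul_kronecker_mul,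
      Matrix.mul_one]
  have h₂ : (Jam E * (ρ ⊗ₖ 1) * (A ⊗ₖ B)).trace = (Jam E * ((ρ * A) ⊗ₖ B)).trace := by
    rw [Matrix.mul_assoc, ← mul_kronecker_mul, Matrix.one_mul]
  rw [sot, smul_mul, add_mul, trace_smul, trace_add, h₁, h₂, trace_jam_mul_kronecker,
    trace_jam_mul_kronecker, map_smul, map_add, smul_mul, add_mul, trace_smul, trace_add,
    add_comm]

end

def adLinearMap (γ : ℝ) : Matrix (Fin 2) (Fin 2) ℂ →ₗ[ℂ] Matrix (Fin 2) (Fin 2) ℂ where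
  toFun := AD γ
  map_add' X Y := by simp only [AD, Matrix.mul_add, Matrix.add_mul]; abel
  map_smul' c X := by
    simp only [AD, Matrix.mul_smul, Matrix.smul_mul, smul_add, RingHom.id_apply]

@[simp]
theorem coe_adLinearMap (γ : ℝ) : ⇑(adLinearMap γ) = AD γ := rfl

theorem AD_apply {γ : ℝ} (hγ0 : 0 ≤ γ) (hγ1 : γ ≤ 1) (X : Matrix (Fin 2) (Fin 2) ℂ) :
    AD γ X = !![X 0 0 + γ * X 1 1, √(1 - γ) * X 0 1; √(1 - γ) * X 1 0, (1 - γ) * X 1 1] := by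
  have hsq : ((√γ : ℝ) : ℂ) * √γ = γ := by
    rw [← Complex.ofReal_mul, Real.mul_self_sqrt hγ0]
  have hsq' : ((√(1 - γ) : ℝ) : ℂ) * √(1 - γ) = 1 - γ := by
    rw [← Complex.ofReal_mul, Real.mul_self_sqrt (sub_nonneg.mpr hγ1), Complex.ofReal_sub,
      Complex.ofReal_one]
  have hK₀ : (AD0 γ)ᴴ = AD0 γ := by
    rw [eta_fin_two (AD0 γ)ᴴ]; simp [AD0]
  have hK₁ : (AD1 γ)ᴴ = !![0, 0; (√γ : ℂ), 0] := by
    rw [eta_fin_two (AD1 γ)ᴴ]; simp [AD1]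
  rw [AD, hK₀, hK₁, eta_fin_two X]
  simp only [AD0, AD1, mul_fin_two]
  ext i j
  fin_cases i <;> fin_cases j <;>
    simp [mul_right_comm _ (X 1 1), hsq, hsq', mul_comm (X 0 1)]

theorem trace_sot_AD_diagonal_mul_kronecker {γ : ℝ} (hγ0 : 0 ≤ γ) (hγ1 : γ ≤ 1) (a b : ℂ)
    (A B : Matrix (Fin 2) (Fin 2) ℂ) :
    (sot (AD γ) !![a, 0; 0, b] * (A ⊗ₖ B)).trace =
      a * A 0 0 * B 0 0 + (a + b) / 2 * √(1 - γ) * (A 0 1 * B 1 0 + A 1 0 * B 0 1)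
        + b * A 1 1 * (γ * B 0 0 + (1 - γ) * B 1 1) := by
  have h := trace_sot_mul_kronecker (adLinearMap γ) !![a, 0; 0, b] A B
  rw [coe_adLinearMap] at h
  rw [h, AD_apply hγ0 hγ1, trace_fin_two]
  simp only [mul_apply, Fin.sum_univ_two, of_apply, cons_val', cons_val_zero, cons_val_one,
    cons_val_fin_one, Matrix.smul_apply, Matrix.add_apply, smul_eq_mul]
  ring

theorem amplitude_damping_two_time_values_general (γ r3 : ℝ) (hγ0 : 0 ≤ γ) (hγ1 : γ ≤ 1) :
    letI ρ : Matrix (Fin 2) (Fin 2) ℂ :=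
      !![(((1 + r3) / 2 : ℝ) : ℂ), 0; 0, (((1 - r3) / 2 : ℝ) : ℂ)]
    letI p : Fin 4 → Matrix (Fin 2) (Fin 2) ℂ := ![1, pauli1, pauli2, pauli3]
    letI tt : Fin 4 → Fin 4 → ℂ := fun α β => (sot (AD γ) ρ * (p α ⊗ₖ p β)).trace
    tt 0 3 = ((r3 + γ * (1 - r3) : ℝ) : ℂ) ∧
    tt 3 0 = (r3 : ℂ) ∧
    tt 1 1 = (Real.sqrt (1 - γ) : ℂ) ∧
    tt 2 2 = (Real.sqrt (1 - γ) : ℂ) ∧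
    tt 3 3 = ((1 - γ * (1 - r3) : ℝ) : ℂ) ∧
    ∀ α β : Fin 4, α ≠ β → (α, β) ≠ ((0 : Fin 4), (3 : Fin 4)) →
      (α, β) ≠ ((3 : Fin 4), (0 : Fin 4)) → tt α β = 0 := by
  beta_reduce
  simp only [trace_sot_AD_diagonal_mul_kronecker hγ0 hγ1]
  refine ⟨?_, ?_, ?_, ?_, ?_, fun α β hne h03 h30 => ?vanishing⟩
  case vanishing =>
    fin_cases α <;> fin_cases β <;> simp_all [pauli1, pauli2, pauli3]
  all_goals
    simp only [pauli1, pauli2, pauli3, cons_val_zero, cons_val_one, cons_val, one_apply_eq,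
      of_apply, cons_val', cons_val_fin_one, neg_mul, mul_neg, Complex.I_mul_I]
    push_cast
    ring

/-- The table of two-time expectation values `⟨σ_α, σ_β⟩ = Tr[(E ⋆ ρ)(σ_α ⊗ σ_β)]` for
the amplitude-damping process `(E, ρ)` with diagonal input `ρ`. -/
theorem amplitude_damping_two_time_values (γ r3 : ℝ) (hγ0 : 0 ≤ γ) (hγ1 : γ ≤ 1)
    (hr0 : -1 ≤ r3) (hr1 : r3 ≤ 1) :
    letI ρ : Matrix (Fin 2) (Fin 2) ℂ :=
      !![(((1 + r3) / 2 : ℝ) : ℂ), 0; 0, (((1 - r3) / 2 : ℝ) : ℂ)]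
    letI p : Fin 4 → Matrix (Fin 2) (Fin 2) ℂ := ![1, pauli1, pauli2, pauli3]
    letI tt : Fin 4 → Fin 4 → ℂ := fun α β => (sot (AD γ) ρ * (p α ⊗ₖ p β)).trace
    tt 0 3 = ((r3 + γ * (1 - r3) : ℝ) : ℂ) ∧
    tt 3 0 = (r3 : ℂ) ∧
    tt 1 1 = (Real.sqrt (1 - γ) : ℂ) ∧
    tt 2 2 = (Real.sqrt (1 - γ) : ℂ) ∧
    tt 3 3 = ((1 - γ * (1 - r3) : ℝ) : ℂ) ∧
    ∀ α β : Fin 4, α ≠ β → (α, β) ≠ ((0 : Fin 4), (3 : Fin 4)) →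
      (α, β) ≠ ((3 : Fin 4), (0 : Fin 4)) → tt α β = 0 :=
  amplitude_damping_two_time_values_general γ r3 hγ0 hγ1
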